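/- arXiv:2004.00428 — 4 statements merged into one kernel-verified Lean document; each statement's English description precedes it below -/
import Mathlib

section
/- Suppose ρ: D → ℝ is C¹ and strictly positive on D \ {0}, f: D → ℝⁿ is C¹, and for all x ∈ D \ {0} one has div(ρ·f)(x) ≤ 0 and div(ρ⁻¹·f)(x) ≥ 0. Then ⟨grad ρ(x), f(x)⟩ ≤ 0 for all x ∈ D \ {0}. -/
open scoped BigOperators RealInnerProductSpace

/-! By the product rule, `div (ρ f) = ∇ρ · f + ρ div f` and
`div (ρ⁻¹ f) = -ρ⁻² ∇ρ · f + ρ⁻¹ div f`, so `2 ∇ρ · f = div (ρ f) - ρ² div (ρ⁻¹ f)`, and the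
two sign conditions make the right-hand side nonpositive. -/

/-- Divergence of a vector field on ℝⁿ. -/
noncomputable def vdiv {n : ℕ} (f : EuclideanSpace ℝ (Fin n) → EuclideanSpace ℝ (Fin n))
    (x : EuclideanSpace ℝ (Fin n)) : ℝ :=
  ∑ i, fderiv ℝ f x (EuclideanSpace.single i (1:ℝ)) i

section

variable {n : ℕ}

theorem ContinuousLinearMap.sum_apply_single_mul (L : EuclideanSpace ℝ (Fin n) →L[ℝ] ℝ)
    (v : EuclideanSpace ℝ (Fin n)) :
    ∑ i, L (EuclideanSpace.single i 1) * v i = L v := by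
  conv_rhs => rw [← (EuclideanSpace.basisFun (Fin n) ℝ).sum_repr v]
  simp [mul_comm]

theorem vdiv_smul {g : EuclideanSpace ℝ (Fin n) → ℝ}
    {f : EuclideanSpace ℝ (Fin n) → EuclideanSpace ℝ (Fin n)} {x : EuclideanSpace ℝ (Fin n)}
    (hg : DifferentiableAt ℝ g x) (hf : DifferentiableAt ℝ f x) :
    vdiv (fun y => g y • f y) x = fderiv ℝ g x (f x) + g x * vdiv f x := by
  simp only [vdiv, fderiv_fun_smul hg hf, Finset.mul_sum, ← Finset.sum_add_distrib,
    ← (fderiv ℝ g x).sum_apply_single_mul (f x)]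
  refine Finset.sum_congr rfl fun i _ => ?_
  simp [mul_comm, add_comm]

theorem two_mul_fderiv_apply_eq_vdiv_sub {ρ : EuclideanSpace ℝ (Fin n) → ℝ}
    {f : EuclideanSpace ℝ (Fin n) → EuclideanSpace ℝ (Fin n)} {x : EuclideanSpace ℝ (Fin n)}
    (hρ : DifferentiableAt ℝ ρ x) (hf : DifferentiableAt ℝ f x) (hρx : ρ x ≠ 0) :
    2 * fderiv ℝ ρ x (f x) =
      vdiv (fun y => ρ y • f y) x - ρ x ^ 2 * vdiv (fun y => (ρ y)⁻¹ • f y) x := by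
  have hinv : HasFDerivAt (fun y => (ρ y)⁻¹) (-(ρ x ^ 2)⁻¹ • fderiv ℝ ρ x) x :=
    (hasDerivAt_inv hρx).comp_hasFDerivAt x hρ.hasFDerivAt
  rw [vdiv_smul hρ hf, vdiv_smul hinv.differentiableAt hf, hinv.fderiv]
  simp only [FunLike.coe_smul, Pi.smul_apply, smul_eq_mul]
  field_simp
  ring

end

theorem grad_inner_nonpos_case4_general {n : ℕ} (D : Set (EuclideanSpace ℝ (Fin n))) (hD : IsOpen D)
    (ρ : EuclideanSpace ℝ (Fin n) → ℝ) (f : EuclideanSpace ℝ (Fin n) → EuclideanSpace ℝ (Fin n))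
    (hρ : ContDiffOn ℝ 1 ρ D) (hρpos : ∀ x ∈ D, x ≠ 0 → 0 < ρ x)
    (hf : ContDiffOn ℝ 1 f D)
    (hdiv1 : ∀ x ∈ D, x ≠ 0 → vdiv (fun y => ρ y • f y) x ≤ 0)
    (hdiv2 : ∀ x ∈ D, x ≠ 0 → 0 ≤ vdiv (fun y => (ρ y)⁻¹ • f y) x) :
    ∀ x ∈ D, x ≠ 0 → ⟪gradient ρ x, f x⟫ ≤ 0 := by
  intro x hx hx0
  have hD_nhds := hD.mem_nhds hx
  have hρx := hρpos x hx hx0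
  have identity := two_mul_fderiv_apply_eq_vdiv_sub
    ((hρ.contDiffAt hD_nhds).differentiableAt one_ne_zero)
    ((hf.contDiffAt hD_nhds).differentiableAt one_ne_zero) hρx.ne'
  rw [inner_gradient_left]
  linarith [hdiv1 x hx hx0, mul_nonneg (sq_nonneg (ρ x)) (hdiv2 x hx hx0)]

theorem grad_inner_nonpos_case4 {n : ℕ} (D : Set (EuclideanSpace ℝ (Fin n))) (hD : IsOpen D)
    (h0 : (0 : EuclideanSpace ℝ (Fin n)) ∈ D)
    (ρ : EuclideanSpace ℝ (Fin n) → ℝ) (f : EuclideanSpace ℝ (Fin n) → EuclideanSpace ℝ (Fin n))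
    (hρ : ContDiffOn ℝ 1 ρ D) (hρpos : ∀ x ∈ D, x ≠ 0 → 0 < ρ x)
    (hf : ContDiffOn ℝ 1 f D)
    (hdiv1 : ∀ x ∈ D, x ≠ 0 → vdiv (fun y => ρ y • f y) x ≤ 0)
    (hdiv2 : ∀ x ∈ D, x ≠ 0 → 0 ≤ vdiv (fun y => (ρ y)⁻¹ • f y) x) :
    ∀ x ∈ D, x ≠ 0 → ⟪gradient ρ x, f x⟫ ≤ 0 :=
  grad_inner_nonpos_case4_general D hD ρ f hρ hρpos hf hdiv1 hdiv2
end

section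
/- Let ρ: D → ℝ be a positive definite C¹ function with ρ strictly positive on D \ {0}, f: D → ℝⁿ be C¹ with f(0) = 0. If div(ρ⁻¹·f)(x) > 0 and div f(x) ≤ 0 for all x ∈ D \ {0}, then x = 0 is an asymptotically stable equilibrium of ẋ = f(x). -/
/-!
The identity `⟪∇ρ, f⟫ = ρ · div f - ρ² · div (ρ⁻¹ f)` turns the two divergence conditions into
`⟪∇ρ, f⟫ < 0` off the origin, so `ρ` is a strict Lyapunov function. Solutions starting in a
small sublevel set of `ρ` inside a ball cannot reach the sphere bounding that ball, which gives
stability. On the compact annuli `ε ≤ ‖x‖ ≤ r` the orbital derivative of `ρ` is bounded away from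
zero, so `ρ` along a solution eventually drops below the minimum of `ρ` on each annulus, which
gives attraction.
-/

open scoped BigOperators RealInnerProductSpace Topology

open Metric Set Filter

/-- Asymptotic stability of the equilibrium `0` of `ẋ = f x`, for solutions that remain in `D`. -/
def AsymptoticallyStableOn {E : Type*} [NormedAddCommGroup E] [NormedSpace ℝ E]
    (f : E → E) (D : Set E) : Prop :=
  ∀ U ∈ 𝓝 (0 : E), ∃ W ∈ 𝓝 (0 : E), ∀ sol : ℝ → E,
    (∀ t, 0 ≤ t → HasDerivAt sol (f (sol t)) t) → (∀ t, 0 ≤ t → sol t ∈ D) → sol 0 ∈ W →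
      (∀ t, 0 ≤ t → sol t ∈ U) ∧ Tendsto sol atTop (𝓝 0)

theorem sub_le_mul_sub_of_hasDerivAt_of_le {φ φ' : ℝ → ℝ} {c : ℝ}
    (hφ : ∀ t, 0 ≤ t → HasDerivAt φ (φ' t) t) (hφ' : ∀ t, 0 ≤ t → φ' t ≤ c)
    {s t : ℝ} (hs : 0 ≤ s) (hst : s ≤ t) : φ t - φ s ≤ c * (t - s) := by
  refine (convex_Ici 0).image_sub_le_mul_sub_of_deriv_le
    (fun t ht ↦ (hφ t ht).continuousAt.continuousWithinAt)
    (fun t ht ↦ ?_) (fun t ht ↦ ?_) s hs t (hs.trans hst) hst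
  all_goals rw [interior_Ici] at ht
  · exact (hφ t ht.le).differentiableAt.differentiableWithinAt
  · exact (hφ t ht.le).deriv ▸ hφ' t ht.le

section Lyapunov

variable {E : Type*} [NormedAddCommGroup E] {V : E → ℝ} {sol : ℝ → E}

theorem norm_lt_of_antitoneOn_of_le_on_sphere {r m : ℝ} (hm : ∀ x ∈ sphere 0 r, m ≤ V x)
    (hanti : AntitoneOn (fun t ↦ V (sol t)) (Ici 0)) (hsol : ContinuousOn sol (Ici 0))
    (hr : ‖sol 0‖ < r) (hVm : V (sol 0) < m) {t : ℝ} (ht : 0 ≤ t) : ‖sol t‖ < r := by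
  by_contra! hrt
  obtain ⟨s, ⟨hs, hst⟩, hsr⟩ : r ∈ (fun s ↦ ‖sol s‖) '' Icc 0 t :=
    intermediate_value_Icc ht ((hsol.mono Icc_subset_Ici_self).norm) ⟨hr.le, hrt⟩
  have := hm (sol s) (by simpa using hsr)
  linarith [hanti self_mem_Ici hs hs]

variable [NormedSpace ℝ E] {D : Set E} {f : E → E}

theorem sub_le_mul_sub_of_isSolution (hV : DifferentiableOn ℝ V D) (hD : IsOpen D)
    (hsol : ∀ t, 0 ≤ t → HasDerivAt sol (f (sol t)) t) (hsolD : ∀ t, 0 ≤ t → sol t ∈ D)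
    {c : ℝ} (hc : ∀ t, 0 ≤ t → fderiv ℝ V (sol t) (f (sol t)) ≤ c)
    {s t : ℝ} (hs : 0 ≤ s) (hst : s ≤ t) : V (sol t) - V (sol s) ≤ c * (t - s) :=
  sub_le_mul_sub_of_hasDerivAt_of_le (fun t ht ↦
    ((hV.differentiableAt (hD.mem_nhds (hsolD t ht))).hasFDerivAt.comp_hasDerivAt t
      (hsol t ht))) hc hs hst

theorem antitoneOn_of_isSolution (hV : DifferentiableOn ℝ V D) (hD : IsOpen D)
    (hsol : ∀ t, 0 ≤ t → HasDerivAt sol (f (sol t)) t) (hsolD : ∀ t, 0 ≤ t → sol t ∈ D)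
    (hg : ∀ x ∈ D, fderiv ℝ V x (f x) ≤ 0) : AntitoneOn (fun t ↦ V (sol t)) (Ici 0) :=
  fun s hs t _ hst ↦ sub_nonpos.1 <| by
    simpa using sub_le_mul_sub_of_isSolution hV hD hsol hsolD (c := 0)
      (fun t ht ↦ hg _ (hsolD t ht)) hs hst

variable [ProperSpace E]

theorem exists_lt_of_lyapunov (hD : IsOpen D) (hV : DifferentiableOn ℝ V D) (hV0 : V 0 = 0)
    (hg : ContinuousOn (fun x ↦ fderiv ℝ V x (f x)) D)
    (hgneg : ∀ x ∈ D, x ≠ 0 → fderiv ℝ V x (f x) < 0)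
    (hsol : ∀ t, 0 ≤ t → HasDerivAt sol (f (sol t)) t) {r : ℝ} (hrD : closedBall 0 r ⊆ D)
    (hr : ∀ t, 0 ≤ t → sol t ∈ closedBall 0 r) {c : ℝ} (hc : 0 < c) :
    ∃ T, 0 ≤ T ∧ V (sol T) < c := by
  by_contra! hcV
  set K := closedBall 0 r ∩ V ⁻¹' Ici c
  have hK : IsCompact K := (isCompact_closedBall 0 r).of_isClosed_subset
    ((hV.continuousOn.mono hrD).preimage_isClosed_of_isClosed isClosed_closedBall isClosed_Ici)
    inter_subset_left
  have hsolK : ∀ t, 0 ≤ t → sol t ∈ K := fun t ht ↦ ⟨hr t ht, hcV t ht⟩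
  -- `0 ∉ K`, so the orbital derivative is bounded away from zero on `K`
  obtain ⟨δ, hδ, hgδ⟩ := hK.exists_forall_le' (hg.mono fun x hx ↦ hrD hx.1).neg
    (a := 0) fun x hx ↦ neg_pos.2 <| hgneg x (hrD hx.1) fun h ↦ by
      have := hx.2; simp [h, hV0] at this; linarith
  -- decaying at rate at least `δ`, `V ∘ sol` would reach `0` by time `V (sol 0) / δ`
  have hτ : 0 ≤ V (sol 0) / δ := div_nonneg (hc.le.trans (hcV 0 le_rfl)) hδ.le
  have hdecay := sub_le_mul_sub_of_isSolution hV hD hsol (fun t ht ↦ hrD (hr t ht)) (c := -δ)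
    (fun t ht ↦ by have := hgδ _ (hsolK t ht); rw [Pi.neg_apply] at this; linarith) le_rfl hτ
  rw [sub_zero, neg_mul, mul_div_cancel₀ _ hδ.ne'] at hdecay
  linarith [hcV _ hτ]

theorem tendsto_zero_of_lyapunov (hD : IsOpen D) (hV : DifferentiableOn ℝ V D) (hV0 : V 0 = 0)
    (hVpos : ∀ x ∈ D, x ≠ 0 → 0 < V x) (hg : ContinuousOn (fun x ↦ fderiv ℝ V x (f x)) D)
    (hgneg : ∀ x ∈ D, x ≠ 0 → fderiv ℝ V x (f x) < 0)
    (hsol : ∀ t, 0 ≤ t → HasDerivAt sol (f (sol t)) t)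
    (hanti : AntitoneOn (fun t ↦ V (sol t)) (Ici 0)) {r : ℝ} (hrD : closedBall 0 r ⊆ D)
    (hr : ∀ t, 0 ≤ t → sol t ∈ closedBall 0 r) : Tendsto sol atTop (𝓝 0) := by
  refine Metric.tendsto_nhds.2 fun ε hε ↦ ?_
  have hA : IsCompact (closedBall (0 : E) r \ ball 0 ε) :=
    (isCompact_closedBall 0 r).diff isOpen_ball
  obtain ⟨m, hm, hmA⟩ := hA.exists_forall_le'
    (hV.continuousOn.mono fun x hx ↦ hrD hx.1) (a := 0) fun x hx ↦
      hVpos x (hrD hx.1) fun h ↦ hx.2 (by simpa [h] using hε)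
  obtain ⟨T, hT, hVT⟩ := exists_lt_of_lyapunov hD hV hV0 hg hgneg hsol hrD hr hm
  filter_upwards [eventually_ge_atTop T] with t ht
  by_contra hεt
  linarith [hmA (sol t) ⟨hr t (hT.trans ht), hεt⟩, hanti hT (hT.trans ht) ht]

theorem asymptoticallyStableOn_of_lyapunov (hD : IsOpen D) (h0 : 0 ∈ D)
    (hV : DifferentiableOn ℝ V D) (hV0 : V 0 = 0) (hVpos : ∀ x ∈ D, x ≠ 0 → 0 < V x)
    (hg : ContinuousOn (fun x ↦ fderiv ℝ V x (f x)) D)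
    (hgneg : ∀ x ∈ D, x ≠ 0 → fderiv ℝ V x (f x) < 0) (hf0 : f 0 = 0) :
    AsymptoticallyStableOn f D := by
  intro U hU
  obtain ⟨r, hr, hrDU⟩ := nhds_basis_closedBall.mem_iff.1 (inter_mem (hD.mem_nhds h0) hU)
  obtain ⟨m, hm, hmV⟩ := (isCompact_sphere (0 : E) r).exists_forall_le'
    (hV.continuousOn.mono fun x hx ↦ (hrDU (sphere_subset_closedBall hx)).1) (a := 0)
    fun x hx ↦ hVpos x (hrDU (sphere_subset_closedBall hx)).1 (ne_of_mem_sphere hx hr.ne')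
  have hW : V ⁻¹' Iio m ∈ 𝓝 0 :=
    (hV.continuousOn.continuousAt (hD.mem_nhds h0)).preimage_mem_nhds (hV0 ▸ Iio_mem_nhds hm)
  refine ⟨ball 0 r ∩ V ⁻¹' Iio m, inter_mem (ball_mem_nhds 0 hr) hW, ?_⟩
  rintro sol hsol hsolD ⟨hsol0r, hsol0m⟩
  have hg0 : ∀ x ∈ D, fderiv ℝ V x (f x) ≤ 0 := fun x hx ↦ by
    rcases eq_or_ne x 0 with rfl | h
    · simp [hf0]
    · exact (hgneg x hx h).le
  have hanti := antitoneOn_of_isSolution hV hD hsol hsolD hg0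
  have hball : ∀ t, 0 ≤ t → sol t ∈ closedBall 0 r := fun t ht ↦ mem_closedBall_zero_iff.2
    (norm_lt_of_antitoneOn_of_le_on_sphere hmV hanti
      (fun t ht ↦ (hsol t ht).continuousAt.continuousWithinAt) (by simpa using hsol0r)
      hsol0m ht).le
  exact ⟨fun t ht ↦ (hrDU (hball t ht)).2, tendsto_zero_of_lyapunov hD hV hV0 hVpos hg hgneg
    hsol hanti (fun x hx ↦ (hrDU hx).1) hball⟩

end Lyapunov

theorem sum_mul_apply_single {n : ℕ} (L : EuclideanSpace ℝ (Fin n) →L[ℝ] ℝ)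
    (v : EuclideanSpace ℝ (Fin n)) : ∑ i, v i * L (EuclideanSpace.single i 1) = L v := by
  conv_rhs => rw [← (EuclideanSpace.basisFun (Fin n) ℝ).sum_repr v]
  simp [EuclideanSpace.basisFun_apply]

theorem fderiv_apply_eq_mul_vdiv_sub {n : ℕ} {ρ : EuclideanSpace ℝ (Fin n) → ℝ}
    {f : EuclideanSpace ℝ (Fin n) → EuclideanSpace ℝ (Fin n)} {x : EuclideanSpace ℝ (Fin n)}
    (hρ : DifferentiableAt ℝ ρ x) (hf : DifferentiableAt ℝ f x) (hρx : ρ x ≠ 0) :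
    fderiv ℝ ρ x (f x) = ρ x * vdiv f x - ρ x ^ 2 * vdiv (fun y ↦ (ρ y)⁻¹ • f y) x := by
  have hinv : HasFDerivAt (fun y ↦ (ρ y)⁻¹ • f y) _ x :=
    ((hasFDerivAt_inv' hρx).comp x hρ.hasFDerivAt).smul hf.hasFDerivAt
  rw [vdiv, vdiv, hinv.fderiv, ← sum_mul_apply_single (fderiv ℝ ρ x), Finset.mul_sum,
    Finset.mul_sum, ← Finset.sum_sub_distrib]
  refine Finset.sum_congr rfl fun i _ ↦ ?_
  simp only [add_apply, smul_apply, neg_apply, ContinuousLinearMap.smulRight_apply,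
    ContinuousLinearMap.comp_apply, ContinuousLinearMap.mulLeftRight_apply, Function.comp_apply,
    PiLp.add_apply, PiLp.smul_apply, smul_eq_mul]
  field_simp
  ring

theorem asymptotic_stability_case2 {n : ℕ} (D : Set (EuclideanSpace ℝ (Fin n))) (hD : IsOpen D)
    (h0 : (0 : EuclideanSpace ℝ (Fin n)) ∈ D)
    (ρ : EuclideanSpace ℝ (Fin n) → ℝ) (f : EuclideanSpace ℝ (Fin n) → EuclideanSpace ℝ (Fin n))
    (hρ : ContDiffOn ℝ 1 ρ D) (hρ0 : ρ 0 = 0) (hρpos : ∀ x ∈ D, x ≠ 0 → 0 < ρ x)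
    (hf : ContDiffOn ℝ 1 f D) (hf0 : f 0 = 0)
    (hdiv1 : ∀ x ∈ D, x ≠ 0 → 0 < vdiv (fun y => (ρ y)⁻¹ • f y) x)
    (hdiv2 : ∀ x ∈ D, x ≠ 0 → vdiv f x ≤ 0) :
    ∀ U ∈ 𝓝 (0 : EuclideanSpace ℝ (Fin n)), ∃ V ∈ 𝓝 (0 : EuclideanSpace ℝ (Fin n)),
      ∀ sol : ℝ → EuclideanSpace ℝ (Fin n),
        (∀ t, 0 ≤ t → HasDerivAt sol (f (sol t)) t) →
        (∀ t, 0 ≤ t → sol t ∈ D) →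
        sol 0 ∈ V →
        (∀ t, 0 ≤ t → sol t ∈ U) ∧
          Filter.Tendsto sol Filter.atTop (𝓝 (0 : EuclideanSpace ℝ (Fin n))) := by
  have hρd := hρ.differentiableOn one_ne_zero
  have hfd := hf.differentiableOn one_ne_zero
  refine asymptoticallyStableOn_of_lyapunov hD h0 hρd hρ0 hρpos ?_ (fun x hx hx0 ↦ ?_) hf0
  · exact isBoundedBilinearMap_apply.continuous.comp_continuousOn
      ((hρ.continuousOn_fderiv_of_isOpen hD le_rfl).prodMk hf.continuousOn)
  · have hρx := hρpos x hx hx0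
    rw [fderiv_apply_eq_mul_vdiv_sub (hρd.differentiableAt (hD.mem_nhds hx))
      (hfd.differentiableAt (hD.mem_nhds hx)) hρx.ne']
    nlinarith [mul_nonpos_of_nonneg_of_nonpos hρx.le (hdiv2 x hx hx0),
      mul_pos (pow_pos hρx 2) (hdiv1 x hx hx0)]
end

section
/- Let A be an n×n real matrix, P an n×n symmetric positive definite matrix, α > 0 and β > 1 real numbers. If trace(A) ≤ 0 and the matrix AᵀP + PA − (1/α)·((β−1)/(β+1))·trace(A)·P is negative definite, then the origin is a stable equilibrium of the linear system ẋ = Ax. -/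
/-!
Since `trace A ≤ 0` and the coefficient `(1/α)·((β-1)/(β+1))` is nonnegative, the hypothesis
says that `AᵀP + PA` plus a positive semidefinite multiple of `P` is negative definite, so
`AᵀP + PA` itself is negative definite. Hence `V x = xᵀPx` is nonincreasing along solutions of
`ẋ = Ax`. As `V` is continuous, vanishes at `0`, and dominates `m‖x‖²` for some `m > 0` (by
compactness of the unit sphere), a small initial value keeps `V`, and hence `‖x‖`, small forever.
-/

open Matrix

section Derivatives

variable {ι : Type*} [Fintype ι] {x y : ℝ → ι → ℝ} {x' y' : ι → ℝ} {t : ℝ}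

theorem HasDerivAt.dotProduct (hx : HasDerivAt x x' t) (hy : HasDerivAt y y' t) :
    HasDerivAt (fun s => x s ⬝ᵥ y s) (x' ⬝ᵥ y t + x t ⬝ᵥ y') t := by
  simp only [_root_.dotProduct, ← Finset.sum_add_distrib]
  exact .fun_sum fun i _ => (hasDerivAt_pi.1 hx i).fun_mul (hasDerivAt_pi.1 hy i)

theorem HasDerivAt.matrix_mulVec (M : Matrix ι ι ℝ) (hx : HasDerivAt x x' t) :
    HasDerivAt (fun s => M *ᵥ x s) (M *ᵥ x') t :=
  (Matrix.mulVecLin M).toContinuousLinearMap.hasFDerivAt.comp_hasDerivAt t hx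

end Derivatives

theorem Matrix.PosDef.neg_of_neg_sub_smul {ι : Type*} [Fintype ι] {S P : Matrix ι ι ℝ} {c : ℝ}
    (h : (-(S - c • P)).PosDef) (hP : P.PosSemidef) (hc : c ≤ 0) : (-S).PosDef := by
  have : -S = -(S - c • P) + (-c) • P := by module
  exact this ▸ h.add_posSemidef (hP.smul (neg_nonneg.2 hc))

theorem exists_pos_mul_sq_norm_le {E : Type*} [NormedAddCommGroup E] [NormedSpace ℝ E]
    [FiniteDimensional ℝ E] {f : E → ℝ} (hf : Continuous f)
    (hhom : ∀ (c : ℝ) x, f (c • x) = c ^ 2 * f x) (hpos : ∀ x ≠ 0, 0 < f x) :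
    ∃ m > 0, ∀ x, m * ‖x‖ ^ 2 ≤ f x := by
  have hf0 : f 0 = 0 := by simpa using hhom 0 0
  rcases subsingleton_or_nontrivial E with hE | hE
  · exact ⟨1, one_pos, fun x => by simp [Subsingleton.elim x 0, hf0]⟩
  obtain ⟨u, hu, hmin⟩ := (isCompact_sphere (0 : E) 1).exists_isMinOn
    (NormedSpace.sphere_nonempty.2 zero_le_one) hf.continuousOn
  have hu0 : u ≠ 0 := ne_zero_of_mem_unit_sphere ⟨u, hu⟩
  refine ⟨f u, hpos u hu0, fun x => ?_⟩
  rcases eq_or_ne x 0 with rfl | hx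
  · simp [hf0]
  have hx' : ‖x‖ ≠ 0 := norm_ne_zero_iff.2 hx
  have hscale : f x = ‖x‖ ^ 2 * f (‖x‖⁻¹ • x) := by
    rw [← hhom, smul_smul, mul_inv_cancel₀ hx', one_smul]
  have hsphere : ‖x‖⁻¹ • x ∈ Metric.sphere (0 : E) 1 := by
    simp [norm_smul, inv_mul_cancel₀ hx']
  rw [hscale, mul_comm]
  exact mul_le_mul_of_nonneg_left (hmin hsphere) (sq_nonneg _)

theorem Matrix.PosDef.exists_pos_mul_sq_norm_le_dotProduct_mulVec {ι : Type*} [Fintype ι]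
    {P : Matrix ι ι ℝ} (hP : P.PosDef) : ∃ m > 0, ∀ x, m * ‖x‖ ^ 2 ≤ x ⬝ᵥ P *ᵥ x := by
  refine exists_pos_mul_sq_norm_le (by fun_prop) (fun c x => ?_) (fun x hx => ?_)
  · simp only [mulVec_smul, smul_dotProduct, dotProduct_smul, smul_eq_mul]
    ring
  · simpa using hP.dotProduct_mulVec_pos hx

theorem exists_norm_lt_of_le_of_continuousAt {E : Type*} [SeminormedAddCommGroup E]
    {V : E → ℝ} (hV : ContinuousAt V 0) (hV0 : V 0 = 0) {m : ℝ} (hm : 0 < m)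
    (hlow : ∀ x, m * ‖x‖ ^ 2 ≤ V x) {ε : ℝ} (hε : 0 < ε) :
    ∃ δ > 0, ∀ x y, ‖x‖ < δ → V y ≤ V x → ‖y‖ < ε := by
  obtain ⟨δ, hδ, hsmall⟩ := Metric.continuousAt_iff.1 hV (m * ε ^ 2) (by positivity)
  refine ⟨δ, hδ, fun x y hx hyx => ?_⟩
  have hVx : V x < m * ε ^ 2 := by
    simpa [hV0, dist_zero_right] using (abs_lt.1 (hsmall (x := x) (by simpa using hx))).2
  have : m * ‖y‖ ^ 2 < m * ε ^ 2 := (hlow y).trans_lt (hyx.trans_lt hVx)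
  exact lt_of_pow_lt_pow_left₀ 2 hε.le (lt_of_mul_lt_mul_left this hm.le)

theorem dotProduct_mulVec_add_dotProduct_mulVec {ι : Type*} [Fintype ι] (A P : Matrix ι ι ℝ)
    (x : ι → ℝ) : A *ᵥ x ⬝ᵥ P *ᵥ x + x ⬝ᵥ P *ᵥ (A *ᵥ x) = x ⬝ᵥ (Aᵀ * P + P * A) *ᵥ x := by
  rw [add_mulVec, dotProduct_add, ← mulVec_mulVec, ← mulVec_mulVec, dotProduct_mulVec x Aᵀ,
    vecMul_transpose]

theorem antitone_dotProduct_mulVec_of_hasDerivAt {ι : Type*} [Fintype ι] {A P : Matrix ι ι ℝ}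
    (hS : (-(Aᵀ * P + P * A)).PosSemidef) {x : ℝ → ι → ℝ}
    (hx : ∀ t, HasDerivAt x (A *ᵥ x t) t) : Antitone fun t => x t ⬝ᵥ P *ᵥ x t := by
  have hV : ∀ t, HasDerivAt (fun s => x s ⬝ᵥ P *ᵥ x s) (x t ⬝ᵥ (Aᵀ * P + P * A) *ᵥ x t) t :=
    fun t => dotProduct_mulVec_add_dotProduct_mulVec A P (x t) ▸
      (hx t).dotProduct ((hx t).matrix_mulVec P)
  refine antitone_of_deriv_nonpos (fun t => (hV t).differentiableAt) fun t => ?_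
  simpa only [(hV t).deriv, star_trivial, neg_mulVec, dotProduct_neg, neg_nonneg] using
    hS.dotProduct_mulVec_nonneg (x t)

theorem linear_stability_case1 {n : ℕ} (A P : Matrix (Fin n) (Fin n) ℝ)
    (hP : P.PosDef) (α β : ℝ) (hα : 0 < α) (hβ : 1 < β) (htr : A.trace ≤ 0)
    (hND : (-(Aᵀ * P + P * A - ((1 / α) * ((β - 1) / (β + 1)) * A.trace) • P)).PosDef) :
    ∀ ε > 0, ∃ δ > 0, ∀ sol : ℝ → (Fin n → ℝ),
      (∀ t, HasDerivAt sol (A.mulVec (sol t)) t) →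
      ‖sol 0‖ < δ → ∀ t, 0 ≤ t → ‖sol t‖ < ε := by
  intro ε hε
  have hcoeff : 0 ≤ (1 / α) * ((β - 1) / (β + 1)) :=
    mul_nonneg (by positivity) (div_nonneg (by linarith) (by linarith))
  have hS : (-(Aᵀ * P + P * A)).PosDef :=
    hND.neg_of_neg_sub_smul hP.posSemidef (mul_nonpos_of_nonneg_of_nonpos hcoeff htr)
  obtain ⟨m, hm, hlow⟩ := hP.exists_pos_mul_sq_norm_le_dotProduct_mulVec
  obtain ⟨δ, hδ, hstable⟩ := exists_norm_lt_of_le_of_continuousAt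
    (V := fun x => x ⬝ᵥ P *ᵥ x) (by fun_prop) (by simp) hm hlow hε
  exact ⟨δ, hδ, fun sol hsol h0 t ht =>
    hstable _ _ h0 (antitone_dotProduct_mulVec_of_hasDerivAt hS.posSemidef hsol ht)⟩
end

section
/- Let A be an n×n real matrix and P symmetric positive definite with AᵀP + PA − trace(A)·P negative definite and AᵀP + PA + trace(A)·P negative definite. Then with ρ(x) = (xᵀPx)^α for a positive integer α, the vector field f(x) = Ax satisfies div(ρ·f)(x) < 0 and div(ρ⁻¹·f)(x) > 0 for all x ≠ 0, provided α = 1. -/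
/-!
The product rule `div (g • F) = g * div F + Dg (F)` together with `div (x ↦ A x) = tr A` and,
for `q x = xᵀ P x`, `Dq(x)(A x) = xᵀ (AᵀP + PA) x`, gives
`div (q • A) x = xᵀ (AᵀP + PA + tr(A) P) x` and
`div (q⁻¹ • A) x = -xᵀ (AᵀP + PA - tr(A) P) x / q(x)²`.
The two definiteness hypotheses fix the signs of the numerators; `q x ≠ 0` because `P` is
positive definite.
-/

open Matrix
open scoped BigOperators

/-- Divergence of a vector field on ℝⁿ (as `Fin n → ℝ`). -/
noncomputable def pdiv {n : ℕ} (f : (Fin n → ℝ) → (Fin n → ℝ)) (x : Fin n → ℝ) : ℝ :=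
  ∑ i, fderiv ℝ f x (Pi.single i (1:ℝ)) i

section Calculus

variable {E : Type*} [NormedAddCommGroup E] [NormedSpace ℝ E]

theorem fderiv_fun_inv_apply {g : E → ℝ} {x : E} (hg : DifferentiableAt ℝ g x) (hx : g x ≠ 0)
    (v : E) : fderiv ℝ (fun y => (g y)⁻¹) x v = -fderiv ℝ g x v / g x ^ 2 := by
  have h : HasFDerivAt (fun y => (g y)⁻¹) _ x := (hasFDerivAt_inv hx).comp x hg.hasFDerivAt
  rw [h.fderiv]
  simp [div_eq_mul_inv, mul_comm]

theorem HasFDerivAt.dotProduct {ι : Type*} [Fintype ι] {f g : E → ι → ℝ}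
    {f' g' : E →L[ℝ] ι → ℝ} {x : E} (hf : HasFDerivAt f f' x) (hg : HasFDerivAt g g' x) :
    HasFDerivAt (fun y => f y ⬝ᵥ g y)
      (∑ i, (f x i • (ContinuousLinearMap.proj i).comp g' +
        g x i • (ContinuousLinearMap.proj i).comp f')) x :=
  HasFDerivAt.fun_sum fun i _ => (hasFDerivAt_pi'.1 hf i).mul (hasFDerivAt_pi'.1 hg i)

end Calculus

section Divergence

variable {n : ℕ}

theorem pdiv_smul {g : (Fin n → ℝ) → ℝ} {F : (Fin n → ℝ) → Fin n → ℝ} {x : Fin n → ℝ}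
    (hg : DifferentiableAt ℝ g x) (hF : DifferentiableAt ℝ F x) :
    pdiv (fun y => g y • F y) x = g x * pdiv F x + fderiv ℝ g x (F x) := by
  have hFx : F x = ∑ i, F x i • Pi.single i (1 : ℝ) := pi_eq_sum_univ' (F x)
  rw [pdiv, pdiv, fderiv_fun_smul hg hF, Finset.mul_sum, hFx, map_sum]
  simp only [_root_.add_apply, _root_.smul_apply, ContinuousLinearMap.smulRight_apply, map_smul,
    Pi.add_apply, Pi.smul_apply, smul_eq_mul, Finset.sum_add_distrib, ← hFx]
  simp only [mul_comm (F x _)]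

theorem hasFDerivAt_mulVec (A : Matrix (Fin n) (Fin n) ℝ) (x : Fin n → ℝ) :
    HasFDerivAt (fun y => A *ᵥ y) A.mulVecLin.toContinuousLinearMap x :=
  A.mulVecLin.toContinuousLinearMap.hasFDerivAt

theorem pdiv_mulVec (A : Matrix (Fin n) (Fin n) ℝ) (x : Fin n → ℝ) :
    pdiv (fun y => A *ᵥ y) x = A.trace := by
  simp [pdiv, (hasFDerivAt_mulVec A x).fderiv, Matrix.trace]

end Divergence

section QuadraticForm

variable {n : ℕ} (P : Matrix (Fin n) (Fin n) ℝ) (x : Fin n → ℝ)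

theorem differentiableAt_dotProduct_mulVec_self :
    DifferentiableAt ℝ (fun y => y ⬝ᵥ P *ᵥ y) x :=
  ((hasFDerivAt_id x).dotProduct (hasFDerivAt_mulVec P x)).differentiableAt

theorem fderiv_dotProduct_mulVec_self_apply (v : Fin n → ℝ) :
    fderiv ℝ (fun y => y ⬝ᵥ P *ᵥ y) x v = x ⬝ᵥ P *ᵥ v + v ⬝ᵥ P *ᵥ x := by
  have hq : HasFDerivAt (fun y => y ⬝ᵥ P *ᵥ y) _ x :=
    (hasFDerivAt_id x).dotProduct (hasFDerivAt_mulVec P x)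
  rw [hq.fderiv]
  simp [dotProduct, Finset.sum_add_distrib, mul_comm ((P *ᵥ x) _)]

theorem fderiv_dotProduct_mulVec_self_mulVec (A : Matrix (Fin n) (Fin n) ℝ) :
    fderiv ℝ (fun y => y ⬝ᵥ P *ᵥ y) x (A *ᵥ x) = x ⬝ᵥ (Aᵀ * P + P * A) *ᵥ x := by
  rw [fderiv_dotProduct_mulVec_self_apply, add_mulVec, dotProduct_add, ← mulVec_mulVec,
    ← mulVec_mulVec, dotProduct_mulVec x Aᵀ, vecMul_transpose, add_comm]

theorem pdiv_dotProduct_mulVec_self_smul_mulVec (A : Matrix (Fin n) (Fin n) ℝ) :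
    pdiv (fun y => (y ⬝ᵥ P *ᵥ y) • A *ᵥ y) x = x ⬝ᵥ (Aᵀ * P + P * A + A.trace • P) *ᵥ x := by
  rw [pdiv_smul (differentiableAt_dotProduct_mulVec_self P x)
      (hasFDerivAt_mulVec A x).differentiableAt, pdiv_mulVec,
    fderiv_dotProduct_mulVec_self_mulVec]
  simp only [add_mulVec, dotProduct_add, smul_mulVec, dotProduct_smul, smul_eq_mul]
  ring

theorem pdiv_inv_dotProduct_mulVec_self_smul_mulVec (A : Matrix (Fin n) (Fin n) ℝ)
    (hx : x ⬝ᵥ P *ᵥ x ≠ 0) :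
    pdiv (fun y => (y ⬝ᵥ P *ᵥ y)⁻¹ • A *ᵥ y) x =
      -(x ⬝ᵥ (Aᵀ * P + P * A - A.trace • P) *ᵥ x) / (x ⬝ᵥ P *ᵥ x) ^ 2 := by
  rw [pdiv_smul ((differentiableAt_dotProduct_mulVec_self P x).fun_inv hx)
      (hasFDerivAt_mulVec A x).differentiableAt, pdiv_mulVec,
    fderiv_fun_inv_apply (differentiableAt_dotProduct_mulVec_self P x) hx,
    fderiv_dotProduct_mulVec_self_mulVec]
  simp only [sub_mulVec, add_mulVec, dotProduct_sub, dotProduct_add, smul_mulVec,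
    dotProduct_smul, smul_eq_mul]
  field_simp
  ring

end QuadraticForm

theorem dotProduct_mulVec_neg_of_posDef_neg {n : ℕ} {M : Matrix (Fin n) (Fin n) ℝ}
    (hM : (-M).PosDef) {x : Fin n → ℝ} (hx : x ≠ 0) : x ⬝ᵥ M *ᵥ x < 0 := by
  simpa [neg_mulVec] using hM.dotProduct_mulVec_pos hx

theorem linear_div_sign_conditions {n : ℕ} (A P : Matrix (Fin n) (Fin n) ℝ)
    (hP : P.PosDef)
    (h1 : (-(Aᵀ * P + P * A - A.trace • P)).PosDef)
    (h2 : (-(Aᵀ * P + P * A + A.trace • P)).PosDef)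
    (α : ℕ) (hα1 : α = 1) :
    ∀ x : Fin n → ℝ, x ≠ 0 →
      pdiv (fun y => ((y ⬝ᵥ P.mulVec y) ^ α) • A.mulVec y) x < 0 ∧
      0 < pdiv (fun y => ((y ⬝ᵥ P.mulVec y) ^ α)⁻¹ • A.mulVec y) x := by
  subst hα1
  intro x hx
  have hq : 0 < x ⬝ᵥ P *ᵥ x := by simpa using hP.dotProduct_mulVec_pos hx
  simp only [pow_one]
  rw [pdiv_dotProduct_mulVec_self_smul_mulVec,
    pdiv_inv_dotProduct_mulVec_self_smul_mulVec _ _ _ hq.ne']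
  exact ⟨dotProduct_mulVec_neg_of_posDef_neg h2 hx,
    div_pos (neg_pos.2 (dotProduct_mulVec_neg_of_posDef_neg h1 hx)) (by positivity)⟩
end
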